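/- arXiv:1704.05494 — 2 statements merged into one kernel-verified Lean document; each statement's English description precedes it below -/
import Mathlib

section
/- For every n ≥ 1, the number of admissible pinnacle sets S ⊆ [n] (including the empty set) is binomial(n-1, ⌊(n-1)/2⌋). -/
/-- `i` is a peak of the permutation `w` of `{1,…,n}` (represented on `Fin n`):
`0 < i < n-1` (0-indexed) and `w(i-1) < w(i) > w(i+1)`. -/
def IsPeak {n : ℕ} (w : Equiv.Perm (Fin n)) (i : Fin n) : Prop :=
  0 < i.val ∧ ∃ h : i.val + 1 < n,
    w ⟨i.val - 1, Nat.lt_of_le_of_lt (Nat.sub_le _ _) i.isLt⟩ < w i ∧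
    w ⟨i.val + 1, h⟩ < w i

/-- The pinnacle set of `w`, as a set of values in `{1,…,n}`. -/
def Pin {n : ℕ} (w : Equiv.Perm (Fin n)) : Set ℕ :=
  {v | ∃ i : Fin n, IsPeak w i ∧ v = (w i).val + 1}

/-- `p_S(n)`: the number of permutations in `S_n` with pinnacle set `S`. -/
noncomputable def pcount (n : ℕ) (S : Set ℕ) : ℕ :=
  Nat.card {w : Equiv.Perm (Fin n) // Pin w = S}

/-- `S` is an admissible pinnacle set. -/
def Admissible (S : Finset ℕ) : Prop :=
  ∃ (n : ℕ) (w : Equiv.Perm (Fin n)), Pin w = ↑S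

/-!
A permutation is handled as the sequence `i ↦ w i` of natural numbers. If `k` pinnacles are at
most `s`, then the positions of these peaks, their right neighbours, and the left neighbour of the
leftmost one are `2k + 1` distinct positions (peaks are never adjacent) carrying values below `s`,
so `s > 2k`.

Conversely, a set satisfying these bounds is realised by induction on its maximum `a`: insert the
value `a` into a realisation of length `a - 1` of the remaining set, at a position neither of
whose neighbours is a peak (one exists by counting); this creates exactly the new pinnacle `a`.
Appending a new maximum at the end changes no pinnacle, so the length can be increased freely.

Splitting off the element `n + 1`, the admissible subsets of `[1, n + 1]` of size at most `j`
satisfy Pascal's recursion while `2j ≤ n`, hence number `binom(n, j)`; for `j = ⌊n/2⌋` this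
counts all of them.
-/

open Finset
open Set (MapsTo InjOn)

def IsPeakAt (n : ℕ) (f : ℕ → ℕ) (i : ℕ) : Prop :=
  0 < i ∧ i + 1 < n ∧ f (i - 1) < f i ∧ f (i + 1) < f i

instance (n : ℕ) (f : ℕ → ℕ) : DecidablePred (IsPeakAt n f) :=
  fun _ => inferInstanceAs (Decidable (_ ∧ _))

def seqPin (n : ℕ) (f : ℕ → ℕ) : Set ℕ :=
  {v | ∃ i, IsPeakAt n f i ∧ v = f i + 1}

def peaks (n : ℕ) (f : ℕ → ℕ) : Finset ℕ := (range n).filter (IsPeakAt n f)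

section Sequences

variable {n : ℕ} {f : ℕ → ℕ}

lemma seqPin_congr {g : ℕ → ℕ} (h : ∀ i < n, f i = g i) : seqPin n f = seqPin n g := by
  have hpeak (i : ℕ) : IsPeakAt n f i ↔ IsPeakAt n g i := by
    unfold IsPeakAt
    refine and_congr_right fun _ => and_congr_right fun hn => ?_
    rw [h (i - 1) (by omega), h i (by omega), h (i + 1) hn]
  ext v
  simp only [seqPin, Set.mem_ofPred_eq, hpeak]
  refine exists_congr fun i => and_congr_right fun hi => ?_
  rw [h i (by have := hi.2.1; omega)]

lemma mem_peaks {i : ℕ} : i ∈ peaks n f ↔ IsPeakAt n f i := by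
  simp only [peaks, mem_filter, mem_range, and_iff_right_iff_imp]
  exact fun h => by have := h.2.1; omega

lemma injOn_peaks (hf : InjOn f (Set.Iio n)) : InjOn (f · + 1) (peaks n f) := by
  intro i hi j hj hij
  have hi' := (mem_peaks.1 hi).2.1
  have hj' := (mem_peaks.1 hj).2.1
  exact hf (show i < n by omega) (show j < n by omega) (Nat.add_right_cancel hij)

lemma image_peaks {S : Finset ℕ} (hS : seqPin n f = S) : (peaks n f).image (f · + 1) = S := by
  ext v
  rw [← mem_coe (s := S), ← hS, mem_image]
  simp only [mem_peaks, seqPin, Set.mem_ofPred_eq, eq_comm]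

lemma card_peaks {S : Finset ℕ} (hf : InjOn f (Set.Iio n)) (hS : seqPin n f = S) :
    #(peaks n f) = #S := by
  rw [← image_peaks hS, card_image_of_injOn (injOn_peaks hf)]

lemma card_filter_peaks {S : Finset ℕ} (hf : InjOn f (Set.Iio n)) (hS : seqPin n f = S)
    (t : ℕ) : #((peaks n f).filter (f · + 1 ≤ t)) = #(S.filter (· ≤ t)) := by
  rw [← image_peaks hS, filter_image,
    card_image_of_injOn ((injOn_peaks hf).mono (filter_subset _ _))]

lemma two_mul_card_add_one_le (hf : InjOn f (Set.Iio n)) {Q : Finset ℕ} (hQ : Q.Nonempty)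
    (hpeak : ∀ q ∈ Q, IsPeakAt n f q) {s : ℕ} (hs : ∀ q ∈ Q, f q < s) : 2 * #Q + 1 ≤ s := by
  set q₀ := Q.min' hQ
  have hq₀ : IsPeakAt n f q₀ := hpeak q₀ (Q.min'_mem hQ)
  have hdisj : Disjoint Q (Q.image (· + 1)) := by
    rw [disjoint_right]
    intro _ himg hq
    obtain ⟨q, hq', rfl⟩ := mem_image.1 himg
    have h₁ := hpeak q hq'
    have h₂ := hpeak (q + 1) hq
    unfold IsPeakAt at h₂
    rw [Nat.add_sub_cancel] at h₂
    exact absurd h₁.2.2.2 h₂.2.2.1.not_gt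
  have hnew : q₀ - 1 ∉ Q ∪ Q.image (· + 1) := by
    rw [mem_union, mem_image]
    rintro (h | ⟨q, hq, h⟩)
    · have := Q.min'_le _ h
      have := hq₀.1
      omega
    · have := Q.min'_le _ hq
      omega
  set P := insert (q₀ - 1) (Q ∪ Q.image (· + 1))
  have hcard : #P = 2 * #Q + 1 := by
    rw [card_insert_of_notMem hnew, card_union_of_disjoint hdisj,
      card_image_of_injective _ (add_left_injective 1)]
    ring
  have hmem {i : ℕ} (hi : i ∈ P) : i = q₀ - 1 ∨ i ∈ Q ∨ ∃ q ∈ Q, i = q + 1 := by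
    simpa [P, eq_comm (a := i)] using hi
  have hmaps : Set.MapsTo f P (range s) := by
    intro i hi
    rw [mem_coe, mem_range]
    rcases hmem hi with rfl | hi | ⟨q, hq, rfl⟩
    · exact hq₀.2.2.1.trans (hs _ (Q.min'_mem hQ))
    · exact hs i hi
    · exact (hpeak q hq).2.2.2.trans (hs q hq)
  have hP : (P : Set ℕ) ⊆ Set.Iio n := by
    intro i hi
    show i < n
    rcases hmem hi with rfl | hi | ⟨q, hq, rfl⟩
    · have := hq₀.2.1
      omega
    · have := (hpeak i hi).2.1
      omega
    · exact (hpeak q hq).2.1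
  calc 2 * #Q + 1 = #P := hcard.symm
    _ ≤ #(range s) := card_le_card_of_injOn f hmaps (hf.mono hP)
    _ = s := card_range s

lemma exists_insertion_position (h : 2 * #(peaks n f) + 1 < n) :
    ∃ p, 0 < p ∧ p < n ∧ ¬ IsPeakAt n f (p - 1) ∧ ¬ IsPeakAt n f p := by
  have hcard : #(peaks n f ∪ (peaks n f).image (· + 1)) < #(Icc 1 (n - 1)) := by
    calc #(peaks n f ∪ (peaks n f).image (· + 1))
        ≤ #(peaks n f) + #((peaks n f).image (· + 1)) := card_union_le _ _
      _ ≤ #(peaks n f) + #(peaks n f) := Nat.add_le_add_left card_image_le _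
      _ < #(Icc 1 (n - 1)) := by rw [Nat.card_Icc]; omega
  obtain ⟨p, hp, hbad⟩ := not_subset.1 fun hsub => (card_le_card hsub).not_gt hcard
  rw [mem_Icc] at hp
  rw [mem_union, mem_image, not_or, mem_peaks, not_exists] at hbad
  exact ⟨p, by omega, by omega, fun hpk => hbad.2 (p - 1) ⟨mem_peaks.2 hpk, by omega⟩, hbad.1⟩

end Sequences

def toSeq {n : ℕ} (w : Equiv.Perm (Fin n)) (i : ℕ) : ℕ :=
  if h : i < n then w ⟨i, h⟩ else i

noncomputable def permOfSeq (n : ℕ) (f : ℕ → ℕ) (hmaps : MapsTo f (Set.Iio n) (Set.Iio n))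
    (hinj : InjOn f (Set.Iio n)) : Equiv.Perm (Fin n) :=
  Equiv.ofBijective (fun i => ⟨f i, hmaps i.isLt⟩) <| Finite.injective_iff_bijective.mp
    fun i j h => Fin.ext (hinj i.isLt j.isLt (congrArg Fin.val h))

section Permutations

variable {n : ℕ}

lemma toSeq_of_lt (w : Equiv.Perm (Fin n)) {i : ℕ} (h : i < n) : toSeq w i = w ⟨i, h⟩ :=
  dif_pos h

lemma mapsTo_toSeq (w : Equiv.Perm (Fin n)) : MapsTo (toSeq w) (Set.Iio n) (Set.Iio n) :=
  fun i hi => by rw [toSeq_of_lt w hi]; exact Fin.isLt _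

lemma injOn_toSeq (w : Equiv.Perm (Fin n)) : InjOn (toSeq w) (Set.Iio n) := by
  intro i hi j hj hij
  rw [toSeq_of_lt w hi, toSeq_of_lt w hj] at hij
  exact congrArg Fin.val (w.injective (Fin.ext hij))

lemma isPeak_iff_isPeakAt (w : Equiv.Perm (Fin n)) (i : Fin n) :
    IsPeak w i ↔ IsPeakAt n (toSeq w) i := by
  unfold IsPeak IsPeakAt
  refine and_congr_right fun _ => ⟨fun ⟨hn, hlr⟩ => ⟨hn, ?_⟩, fun ⟨hn, hlr⟩ => ⟨hn, ?_⟩⟩ <;>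
    simpa (disch := omega) only [toSeq_of_lt, Fin.eta, Fin.lt_def] using hlr

lemma pin_eq_seqPin (w : Equiv.Perm (Fin n)) : Pin w = seqPin n (toSeq w) := by
  ext v
  constructor
  · rintro ⟨i, hi, rfl⟩
    exact ⟨i, (isPeak_iff_isPeakAt w i).1 hi, by rw [toSeq_of_lt w i.isLt]⟩
  · rintro ⟨i, hi, rfl⟩
    have hin : i < n := by have := hi.2.1; omega
    exact ⟨⟨i, hin⟩, (isPeak_iff_isPeakAt w _).2 hi, by rw [toSeq_of_lt w hin]⟩

lemma pin_permOfSeq {f : ℕ → ℕ} (hmaps : MapsTo f (Set.Iio n) (Set.Iio n))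
    (hinj : InjOn f (Set.Iio n)) : Pin (permOfSeq n f hmaps hinj) = seqPin n f := by
  rw [pin_eq_seqPin]
  exact seqPin_congr fun i hi => by rw [toSeq_of_lt _ hi]; rfl

lemma pin_one : Pin (1 : Equiv.Perm (Fin n)) = ∅ := by
  rw [Set.eq_empty_iff_forall_notMem]
  rintro v ⟨i, ⟨-, _, -, hr⟩, -⟩
  simp [Fin.lt_def] at hr

end Permutations

def insertAt (f : ℕ → ℕ) (p v i : ℕ) : ℕ :=
  if i < p then f i else if i = p then v else f (i - 1)

section Insertion

variable {f : ℕ → ℕ} {m p : ℕ}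

lemma insertAt_of_lt {v i : ℕ} (h : i < p) : insertAt f p v i = f i := if_pos h

lemma insertAt_self {v : ℕ} : insertAt f p v p = v := by simp [insertAt]

lemma insertAt_of_gt {v i : ℕ} (h : p < i) : insertAt f p v i = f (i - 1) := by
  simp [insertAt, h.not_gt, h.ne']

lemma mapsTo_insertAt (hf : MapsTo f (Set.Iio m) (Set.Iio m)) (hp : p ≤ m) :
    MapsTo (insertAt f p m) (Set.Iio (m + 1)) (Set.Iio (m + 1)) := by
  intro i (hi : i < m + 1)
  show insertAt f p m i < m + 1
  rcases lt_trichotomy i p with h | rfl | h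
  · rw [insertAt_of_lt h]
    exact Nat.lt_succ_of_lt (hf (show i < m by omega))
  · rw [insertAt_self]
    exact Nat.lt_succ_self m
  · rw [insertAt_of_gt h]
    exact Nat.lt_succ_of_lt (hf (show i - 1 < m by omega))

lemma injOn_insertAt (hmaps : MapsTo f (Set.Iio m) (Set.Iio m)) (hinj : InjOn f (Set.Iio m))
    (hp : p ≤ m) : InjOn (insertAt f p m) (Set.Iio (m + 1)) := by
  have hlt (j : ℕ) : m ≤ j ∨ f j < m := (lt_or_ge j m).symm.imp_right fun hj => hmaps hj
  intro i (hi : i < m + 1) j (hj : j < m + 1) hij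
  have := hlt (i - 1); have := hlt i; have := hlt (j - 1); have := hlt j
  unfold insertAt at hij
  split_ifs at hij <;> first
    | omega
    | have := hinj (show _ < m by omega) (show _ < m by omega) hij; omega

lemma isPeakAt_insertAt_iff (hf : MapsTo f (Set.Iio m) (Set.Iio m)) (hp : p ≤ m) (i : ℕ) :
    IsPeakAt (m + 1) (insertAt f p m) i ↔
      (i = p ∧ 0 < p ∧ p < m) ∨ (i + 1 < p ∧ IsPeakAt m f i) ∨
        (p + 1 < i ∧ IsPeakAt m f (i - 1)) := by
  have hlt (j : ℕ) : m ≤ j ∨ f j < m := (lt_or_ge j m).symm.imp_right fun hj => hf hj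
  unfold IsPeakAt
  rcases lt_trichotomy (i + 1) p with h | rfl | h
  · simp (disch := omega) only [insertAt_of_lt]
    omega
  · simp (disch := omega) only [insertAt_of_lt, insertAt_self]
    have := hlt i
    omega
  rcases lt_trichotomy i (p + 1) with h' | rfl | h'
  · obtain rfl : i = p := by omega
    obtain rfl | hi := Nat.eq_zero_or_pos i
    · simp
    simp (disch := omega) only [insertAt_of_lt, insertAt_self, insertAt_of_gt, Nat.add_sub_cancel,
      true_and]
    have := hlt (i - 1); have := hlt i
    omega
  · simp (disch := omega) only [insertAt_self, insertAt_of_gt, Nat.add_sub_cancel]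
    have := hlt p
    omega
  · simp (disch := omega) only [insertAt_of_gt, Nat.add_sub_cancel, show i - 1 + 1 = i by omega]
    omega

lemma seqPin_insertAt_self (hf : MapsTo f (Set.Iio m) (Set.Iio m)) :
    seqPin (m + 1) (insertAt f m m) = seqPin m f := by
  ext v
  simp only [seqPin, Set.mem_ofPred_eq, isPeakAt_insertAt_iff hf le_rfl]
  constructor
  · rintro ⟨i, (⟨-, -, h⟩ | ⟨hi, hpk⟩ | ⟨hi, -, h, -⟩), rfl⟩
    · exact absurd h (lt_irrefl m)
    · exact ⟨i, hpk, by rw [insertAt_of_lt (by omega)]⟩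
    · omega
  · rintro ⟨i, hpk, rfl⟩
    have := hpk.2.1
    exact ⟨i, Or.inr (Or.inl ⟨by omega, hpk⟩), by rw [insertAt_of_lt (by omega)]⟩

lemma seqPin_insertAt (hf : MapsTo f (Set.Iio m) (Set.Iio m)) (hp : 0 < p) (hpm : p < m)
    (hl : ¬ IsPeakAt m f (p - 1)) (hr : ¬ IsPeakAt m f p) :
    seqPin (m + 1) (insertAt f p m) = insert (m + 1) (seqPin m f) := by
  ext v
  simp only [seqPin, Set.mem_ofPred_eq, Set.mem_insert_iff, isPeakAt_insertAt_iff hf hpm.le]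
  constructor
  · rintro ⟨i, (⟨rfl, -⟩ | ⟨hi, hpk⟩ | ⟨hi, hpk⟩), rfl⟩
    · exact Or.inl (by rw [insertAt_self])
    · exact Or.inr ⟨i, hpk, by rw [insertAt_of_lt (by omega)]⟩
    · exact Or.inr ⟨i - 1, hpk, by rw [insertAt_of_gt (by omega)]⟩
  · rintro (rfl | ⟨i, hpk, rfl⟩)
    · exact ⟨p, Or.inl ⟨rfl, hp, hpm⟩, by rw [insertAt_self]⟩
    rcases lt_trichotomy i p with h | rfl | h
    · have : i ≠ p - 1 := by rintro rfl; exact hl hpk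
      exact ⟨i, Or.inr (Or.inl ⟨by omega, hpk⟩), by rw [insertAt_of_lt h]⟩
    · exact absurd hpk hr
    · refine ⟨i + 1, Or.inr (Or.inr ⟨by omega, by simpa using hpk⟩), ?_⟩
      rw [insertAt_of_gt (by omega), Nat.add_sub_cancel]

end Insertion

lemma exists_pin_eq_insert {m : ℕ} (w : Equiv.Perm (Fin m)) {S : Finset ℕ}
    (hS : Pin w = S) (hcard : 2 * #S + 1 < m) :
    ∃ w' : Equiv.Perm (Fin (m + 1)), Pin w' = insert (m + 1) (S : Set ℕ) := by
  rw [pin_eq_seqPin] at hS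
  obtain ⟨p, hp, hpm, hl, hr⟩ :=
    exists_insertion_position (f := toSeq w) (by rwa [card_peaks (injOn_toSeq w) hS])
  refine ⟨permOfSeq (m + 1) _ (mapsTo_insertAt (mapsTo_toSeq w) hpm.le)
    (injOn_insertAt (mapsTo_toSeq w) (injOn_toSeq w) hpm.le), ?_⟩
  rw [pin_permOfSeq, seqPin_insertAt (mapsTo_toSeq w) hp hpm hl hr, hS]

lemma exists_pin_eq_of_le {k m : ℕ} (w : Equiv.Perm (Fin k)) (h : k ≤ m) :
    ∃ w' : Equiv.Perm (Fin m), Pin w' = Pin w := by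
  induction m, h using Nat.le_induction with
  | base => exact ⟨w, rfl⟩
  | succ m _ ih =>
    obtain ⟨w', hw'⟩ := ih
    refine ⟨permOfSeq (m + 1) _ (mapsTo_insertAt (mapsTo_toSeq w') le_rfl)
      (injOn_insertAt (mapsTo_toSeq w') (injOn_toSeq w') le_rfl), ?_⟩
    rw [pin_permOfSeq, seqPin_insertAt_self (mapsTo_toSeq w'), ← pin_eq_seqPin, hw']

/-- Since `#{t ∈ S | t ≤ sᵢ} = i` for the `i`-th smallest element `sᵢ` of `S`, this is the
condition `sᵢ > 2 i`. -/
def AdmissibleCond (S : Finset ℕ) : Prop := ∀ s ∈ S, 2 * #(S.filter (· ≤ s)) < s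

instance : DecidablePred AdmissibleCond := fun S =>
  inferInstanceAs (Decidable (∀ s ∈ S, _))

lemma admissibleCond_insert_iff {S : Finset ℕ} {a : ℕ} (h : ∀ x ∈ S, x < a) :
    AdmissibleCond (insert a S) ↔ AdmissibleCond S ∧ 2 * (#S + 1) < a := by
  have haS : a ∉ S := fun ha => lt_irrefl a (h a ha)
  have hfilter : ∀ s ∈ S, (insert a S).filter (· ≤ s) = S.filter (· ≤ s) := fun s hs => by
    rw [filter_insert, if_neg (h s hs).not_ge]
  have htop : (insert a S).filter (· ≤ a) = insert a S :=
    filter_true_of_mem fun x hx => by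
      rcases mem_insert.1 hx with rfl | hx
      exacts [le_rfl, (h x hx).le]
  unfold AdmissibleCond
  rw [forall_mem_insert, htop, card_insert_of_notMem haS, and_comm]
  exact and_congr_left' (forall₂_congr fun s hs => by rw [hfilter s hs])

lemma admissibleCond_of_seqPin_eq {n : ℕ} {f : ℕ → ℕ} (hf : InjOn f (Set.Iio n))
    {S : Finset ℕ} (hS : seqPin n f = S) : AdmissibleCond S := by
  intro s hs
  rw [← card_filter_peaks hf hS s]
  have hne : ((peaks n f).filter (f · + 1 ≤ s)).Nonempty := by
    rw [← mem_coe, ← hS] at hs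
    obtain ⟨i, hi, rfl⟩ := hs
    exact ⟨i, mem_filter.2 ⟨mem_peaks.2 hi, le_rfl⟩⟩
  have := two_mul_card_add_one_le hf hne (fun q hq => mem_peaks.1 (mem_filter.1 hq).1)
    (s := s) (fun q hq => (mem_filter.1 hq).2)
  omega

lemma exists_pin_eq_of_admissibleCond {S : Finset ℕ} (hS : AdmissibleCond S) {m : ℕ}
    (hm : ∀ x ∈ S, x ≤ m) : ∃ w : Equiv.Perm (Fin m), Pin w = S := by
  induction S using Finset.induction_on_max generalizing m with
  | empty => exact ⟨1, by rw [pin_one, coe_empty]⟩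
  | insert a S hlt ih =>
    obtain ⟨hS, hcard⟩ := (admissibleCond_insert_iff hlt).1 hS
    obtain ⟨w, hw⟩ := ih hS (m := a - 1) fun x hx => by have := hlt x hx; omega
    obtain ⟨w', hw'⟩ := exists_pin_eq_insert w hw (by omega)
    have ham : a - 1 + 1 ≤ m := by have := hm a (mem_insert_self a S); omega
    obtain ⟨w'', hw''⟩ := exists_pin_eq_of_le w' ham
    refine ⟨w'', ?_⟩
    rw [hw'', hw', Nat.sub_add_cancel (by omega), coe_insert]

theorem admissible_iff_admissibleCond (S : Finset ℕ) : Admissible S ↔ AdmissibleCond S :=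
  ⟨fun ⟨_, w, hw⟩ => admissibleCond_of_seqPin_eq (injOn_toSeq w) (pin_eq_seqPin w ▸ hw),
    fun hS => ⟨_, exists_pin_eq_of_admissibleCond hS fun _ hx => le_sup (f := id) hx⟩⟩

lemma two_mul_card_le_of_admissibleCond {n : ℕ} {S : Finset ℕ} (hSn : S ⊆ Icc 1 n)
    (hS : AdmissibleCond S) : 2 * #S ≤ n - 1 := by
  rcases S.eq_empty_or_nonempty with rfl | hne
  · simp
  have hmax := S.max'_mem hne
  have h := hS _ hmax
  rw [filter_true_of_mem fun x hx => S.le_max' x hx] at h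
  have := (mem_Icc.1 (hSn hmax)).2
  omega

def admissibleSubsets (n j : ℕ) : Finset (Finset ℕ) :=
  (Icc 1 n).powerset.filter fun S => AdmissibleCond S ∧ #S ≤ j

lemma admissibleSubsets_zero (n : ℕ) : admissibleSubsets n 0 = {∅} := by
  ext S
  simp only [admissibleSubsets, mem_filter, mem_powerset, mem_singleton, Nat.le_zero,
    card_eq_zero]
  constructor
  · exact fun h => h.2.2
  · rintro rfl
    exact ⟨empty_subset _, fun _ h => absurd h (notMem_empty _), rfl⟩

lemma mem_admissibleSubsets {n j : ℕ} (h : n - 1 ≤ 2 * j + 1) {S : Finset ℕ} :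
    S ∈ admissibleSubsets n j ↔ S ⊆ Icc 1 n ∧ AdmissibleCond S := by
  simp only [admissibleSubsets, mem_filter, mem_powerset]
  refine ⟨fun hS => ⟨hS.1, hS.2.1⟩, fun ⟨hSn, hS⟩ => ⟨hSn, hS, ?_⟩⟩
  have := two_mul_card_le_of_admissibleCond hSn hS
  omega

lemma card_admissibleSubsets_succ_succ {n j : ℕ} (h : 2 * (j + 1) ≤ n) :
    #(admissibleSubsets (n + 1) (j + 1)) =
      #(admissibleSubsets n (j + 1)) + #(admissibleSubsets n j) := by
  have hIcc : Icc 1 (n + 1) = insert (n + 1) (Icc 1 n) := by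
    ext; simp only [mem_Icc, mem_insert]; omega
  simp only [admissibleSubsets, card_filter]
  rw [hIcc, sum_powerset_insert (by simp)]
  congr 1
  refine sum_congr rfl fun T hT => if_congr ?_ rfl rfl
  have hlt : ∀ x ∈ T, x < n + 1 := fun x hx => by
    have := (mem_Icc.1 (mem_powerset.1 hT hx)).2
    omega
  rw [admissibleCond_insert_iff hlt, card_insert_of_notMem fun h => (hlt _ h).false]
  exact ⟨fun ⟨⟨hT, _⟩, _⟩ => ⟨hT, by omega⟩, fun ⟨hT, _⟩ => ⟨⟨hT, by omega⟩, by omega⟩⟩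

lemma card_admissibleSubsets {n j : ℕ} (h : 2 * j ≤ n) :
    #(admissibleSubsets (n + 1) j) = n.choose j := by
  induction n generalizing j with
  | zero =>
    obtain rfl : j = 0 := by omega
    simp [admissibleSubsets_zero]
  | succ n ih =>
    obtain _ | j := j
    · simp [admissibleSubsets_zero]
    rw [card_admissibleSubsets_succ_succ h, ih (j := j) (by omega), Nat.choose_succ_succ',
      add_comm]
    congr 1
    rcases Nat.lt_or_ge (2 * (j + 1)) (n + 1) with h' | h'
    · exact ih (by omega)
    · obtain rfl : n = 2 * j + 1 := by omega
      have : admissibleSubsets (2 * j + 2) (j + 1) = admissibleSubsets (2 * j + 2) j := by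
        ext S
        rw [mem_admissibleSubsets (by omega), mem_admissibleSubsets (by omega)]
      rw [this, ih (by omega), Nat.choose_symm_half]

theorem count_admissible_subsets_general (n : ℕ) :
    Nat.card {S : Finset ℕ // ↑S ⊆ Set.Icc 1 n ∧ Admissible S} =
      Nat.choose (n - 1) ((n - 1) / 2) := by
  have hmem (S : Finset ℕ) :
      S ∈ admissibleSubsets n ((n - 1) / 2) ↔ ↑S ⊆ Set.Icc 1 n ∧ Admissible S := by
    rw [mem_admissibleSubsets (by omega), admissible_iff_admissibleCond, ← coe_Icc, coe_subset]
  rw [← Nat.card_congr (Equiv.subtypeEquivRight hmem), Nat.card_eq_finsetCard]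
  rcases n with _ | n
  · simp [admissibleSubsets_zero]
  · exact card_admissibleSubsets (by omega)

theorem count_admissible_subsets (n : ℕ) (hn : 1 ≤ n) :
    Nat.card {S : Finset ℕ // ↑S ⊆ Set.Icc 1 n ∧ Admissible S} =
      Nat.choose (n - 1) ((n - 1) / 2) :=
  count_admissible_subsets_general n
end

section
/- For every d ≥ 1, the number of admissible pinnacle sets with maximum element 2d+1 and cardinality d equals the Catalan number C_d = binomial(2d,d)/(d+1). -/
/-!
Peaks of a permutation are pairwise non-adjacent and exceed both neighbours. If `k` pinnacles
are `≤ s`, then their positions, the positions just right of them and the one just left of the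
leftmost of them are `2k + 1` distinct positions carrying values `≤ s`; hence `s_i > 2i`.
Conversely, let `|S| = d` with `s_i > 2i` and `S ⊆ {1, …, 2d+1}` (then `s_d = 2d + 1`). If
`t_0 < ⋯ < t_d` is the complement of `S` in `{1, …, 2d+1}`, there are `s_i - i > i` of the `t_j`
below `s_i`, so `t_0 s_1 t_1 s_2 ⋯ s_d t_d` is a permutation with pinnacle set `S`.
Finally, reading `2, 3, …, 2d+1` and writing a down step for each element of `S` and an up step
otherwise turns `s_i > 2i` into the ballot condition: these sets correspond to the Dyck words of
semilength `d`, which the Catalan number counts.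
-/

open Finset DyckStep

theorem List.count_take_eq_count_getElem? {α : Type*} [DecidableEq α] (l : List α) (a : α)
    (m : ℕ) : (l.take m).count a = Nat.count (fun j => l[j]? = some a) m := by
  induction m with
  | zero => simp
  | succ m ih =>
    rw [List.take_add_one, List.count_append, ih, Nat.count_succ]
    cases l[m]? <;> simp [List.count_singleton]

theorem Nat.count_not (p : ℕ → Prop) [DecidablePred p] (n : ℕ) :
    Nat.count (fun k => ¬p k) n = n - Nat.count p n := by
  induction n with
  | zero => simp
  | succ n ih =>
    have := Nat.count_le (p := p) (n := n)
    by_cases h : p n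
    · simp [Nat.count_succ, h, ih]
    · simp only [Nat.count_succ, h, ih, not_false_eq_true, if_true, if_false]
      omega

theorem Nat.count_add_of_forall_lt_not {p : ℕ → Prop} [DecidablePred p] {k : ℕ}
    (h : ∀ j < k, ¬p j) (m : ℕ) : Nat.count p (m + k) = Nat.count (fun j => p (j + k)) m := by
  rw [Nat.count_add' p m k, Nat.count_iff_forall_not.2 h, add_zero]

theorem Nat.count_mem_eq_card {S : Finset ℕ} {n : ℕ} (h : ∀ s ∈ S, s < n) :
    Nat.count (· ∈ S) n = #S := by
  rw [Nat.count_eq_card_filter_range, filter_mem_eq_inter,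
    inter_eq_right.2 fun s hs => mem_range.2 (h s hs)]

theorem DyckStep.count_U_add_count_D (l : List DyckStep) : l.count U + l.count D = l.length := by
  induction l with
  | nil => rfl
  | cons a l ih => cases a <;> simp <;> omega

theorem Equiv.Perm.extendDomain_equivSubtype_apply {n : ℕ} (w : Equiv.Perm (Fin n)) {k : ℕ}
    (hk : k < n) : w.extendDomain Fin.equivSubtype k = w ⟨k, hk⟩ :=
  w.extendDomain_apply_subtype Fin.equivSubtype hk

/-- `Nat.count (· ∈ S) s + 1` is the rank of `s ∈ S`, so this is the condition `s_i > 2i`. -/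
def PinnacleBound (S : Finset ℕ) : Prop :=
  ∀ s ∈ S, 2 * (Nat.count (· ∈ S) s + 1) < s

theorem pinnacleBound_iff {S : Finset ℕ} :
    PinnacleBound S ↔ ∀ m, 2 * Nat.count (· ∈ S) (m + 2) ≤ m := by
  constructor
  · intro hS
    have h : ∀ m, 2 * Nat.count (· ∈ S) m ≤ m - 2 := by
      intro m
      induction m with
      | zero => simp
      | succ m ih =>
        rw [Nat.count_succ]
        split_ifs with hm
        · have := hS m hm
          omega
        · omega
    exact fun m => h (m + 2)
  · intro h s hs
    have hmono := Nat.count_monotone (· ∈ S) (show s + 1 ≤ s - 1 + 2 by omega)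
    have := h (s - 1)
    rw [Nat.count_succ, if_pos hs] at hmono
    omega

namespace PinnacleBound

theorem two_le {S : Finset ℕ} (hS : PinnacleBound S) {s : ℕ} (hs : s ∈ S) : 2 ≤ s := by
  have := hS s hs
  omega

theorem mem_of_card_eq {S : Finset ℕ} (hS : PinnacleBound S) {d : ℕ} (hd : 1 ≤ d)
    (hcard : #S = d) (hle : ∀ s ∈ S, s ≤ 2 * d + 1) : 2 * d + 1 ∈ S := by
  have h1 := pinnacleBound_iff.1 hS (2 * d - 1)
  have h2 : Nat.count (· ∈ S) (2 * d + 1 + 1) = d := by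
    rw [Nat.count_mem_eq_card fun s hs => by have := hle s hs; omega, hcard]
  rw [show 2 * d - 1 + 2 = 2 * d + 1 by omega] at h1
  exact Nat.count_lt_count_succ_iff (p := (· ∈ S)).1 (by omega)

end PinnacleBound

theorem two_mul_card_peaks_le {f : ℕ → ℕ} (hf : Function.Injective f) {A : Finset ℕ} {v : ℕ}
    (hA : ∀ a ∈ A, 0 < a ∧ f (a - 1) < f a ∧ f (a + 1) < f a) (hv : ∀ a ∈ A, f a ≤ v) :
    2 * #A ≤ v := by
  rcases A.eq_empty_or_nonempty with rfl | hne
  · simp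
  have hdisj : Disjoint A (A.image (· + 1)) := by
    refine disjoint_right.2 fun b hb hbA => ?_
    obtain ⟨a, ha, rfl⟩ := mem_image.1 hb
    have := (hA a ha).2.2
    have := (hA _ hbA).2.1
    simp only [add_tsub_cancel_right] at this
    omega
  set m := A.min' hne
  have hm : m - 1 ∉ A ∪ A.image (· + 1) := by
    have := (hA m (A.min'_mem hne)).1
    simp only [mem_union, mem_image, not_or, not_exists, not_and]
    exact ⟨fun h => by have := A.min'_le _ h; omega,
      fun a ha _ => by have := A.min'_le _ ha; omega⟩
  have hmaps : ∀ x ∈ insert (m - 1) (A ∪ A.image (· + 1)), f x ∈ range (v + 1) := by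
    intro x hx
    have hmA := hA m (A.min'_mem hne)
    have hmv := hv m (A.min'_mem hne)
    simp only [mem_insert, mem_union, mem_image] at hx
    rw [mem_range]
    rcases hx with rfl | ha | ⟨a, ha, rfl⟩
    · omega
    · have := hv x ha
      omega
    · have := hv a ha
      have := (hA a ha).2.2
      omega
  have := card_le_card_of_injOn f hmaps hf.injOn
  rw [card_insert_of_notMem hm, card_union_of_disjoint hdisj,
    card_image_of_injective _ (add_left_injective 1), card_range] at this
  omega

theorem IsPeak.extendDomain {n : ℕ} {w : Equiv.Perm (Fin n)} {i : Fin n} (hi : IsPeak w i) :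
    0 < (i : ℕ) ∧ w.extendDomain Fin.equivSubtype (i - 1) < w i ∧
      w.extendDomain Fin.equivSubtype (i + 1) < w i := by
  obtain ⟨hpos, hlt, hleft, hright⟩ := hi
  rw [Equiv.Perm.extendDomain_equivSubtype_apply w (by omega),
    Equiv.Perm.extendDomain_equivSubtype_apply w hlt]
  exact ⟨hpos, hleft, hright⟩

theorem pinnacleBound_of_pin_eq {n : ℕ} {w : Equiv.Perm (Fin n)} {S : Finset ℕ}
    (hw : Pin w = ↑S) : PinnacleBound S := by
  set σ := w.extendDomain Fin.equivSubtype
  have hS : ∀ t ∈ S, ∃ i : Fin n, IsPeak w i ∧ t = w i + 1 := fun t ht => by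
    rw [← Finset.mem_coe, ← hw] at ht
    exact ht
  have hσ : ∀ t ∈ S, 0 < σ.symm (t - 1) ∧ σ (σ.symm (t - 1) - 1) < t - 1 ∧
      σ (σ.symm (t - 1) + 1) < t - 1 := by
    intro t ht
    obtain ⟨i, hi, rfl⟩ := hS t ht
    rw [Nat.add_sub_cancel, σ.symm_apply_eq.2 (w.extendDomain_equivSubtype_apply i.2).symm]
    exact hi.extendDomain
  have hpos : ∀ t ∈ S, 0 < t := fun t ht => by
    obtain ⟨i, -, rfl⟩ := hS t ht
    omega
  intro s hs
  set A := {t ∈ range (s + 1) | t ∈ S}.image (fun t => σ.symm (t - 1))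
  have hA : #A = Nat.count (· ∈ S) s + 1 := by
    rw [card_image_of_injOn, ← Nat.count_eq_card_filter_range, Nat.count_succ, if_pos hs]
    intro t ht t' ht' htt
    have := hpos t (mem_filter.1 ht).2
    have := hpos t' (mem_filter.1 ht').2
    have := σ.symm.injective htt
    omega
  have hpeaks := two_mul_card_peaks_le σ.injective (A := A) (v := s - 1)
    (by
      simp only [A, mem_image, mem_filter, forall_exists_index, and_imp]
      rintro _ t - ht rfl
      simpa using hσ t ht)
    (by
      simp only [A, mem_image, mem_filter, mem_range, forall_exists_index, and_imp]
      rintro _ t ht - rfl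
      rw [Equiv.apply_symm_apply]
      omega)
  omega

def interleave (u t : ℕ → ℕ) (i : ℕ) : ℕ :=
  if i % 2 = 1 then u (i / 2) else t (i / 2)

section Interleave

variable {d : ℕ} {u t : ℕ → ℕ}

@[simp]
theorem interleave_two_mul (k : ℕ) : interleave u t (2 * k) = t k := by
  simp [interleave]

@[simp]
theorem interleave_two_mul_add_one (k : ℕ) : interleave u t (2 * k + 1) = u k := by
  simp [interleave, show (2 * k + 1) / 2 = k by omega]

theorem interleave_lt (hu : ∀ k < d, u k < 2 * d + 1) (ht : ∀ j ≤ d, t j < 2 * d + 1) {i : ℕ}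
    (hi : i < 2 * d + 1) : interleave u t i < 2 * d + 1 := by
  obtain ⟨k, rfl | rfl⟩ := Nat.even_or_odd' i
  · simpa using ht k (by omega)
  · simpa using hu k (by omega)

theorem injOn_interleave (hu : Set.InjOn u (Set.Iio d)) (ht : Function.Injective t)
    (hne : ∀ k < d, ∀ j, u k ≠ t j) : Set.InjOn (interleave u t) (Set.Iio (2 * d + 1)) := by
  intro i hi i' hi' h
  simp only [Set.mem_Iio] at hi hi'
  obtain ⟨k, rfl | rfl⟩ := Nat.even_or_odd' i <;> obtain ⟨k', rfl | rfl⟩ := Nat.even_or_odd' i' <;>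
    simp only [interleave_two_mul, interleave_two_mul_add_one] at h
  · rw [ht h]
  · exact absurd h.symm (hne k' (by omega) k)
  · exact absurd h (hne k (by omega) k')
  · rw [hu (by simp; omega) (by simp; omega) h]

theorem isPeak_iff_of_val_eq_interleave (ht : StrictMono t) (htu : ∀ k < d, t (k + 1) < u k)
    {w : Equiv.Perm (Fin (2 * d + 1))} (hw : ∀ i, (w i : ℕ) = interleave u t i)
    (i : Fin (2 * d + 1)) : IsPeak w i ↔ ∃ k < d, (i : ℕ) = 2 * k + 1 := by
  constructor
  · rintro ⟨hpos, hlt, -, hright⟩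
    rw [Fin.lt_def, hw, hw] at hright
    obtain ⟨k, hk | hk⟩ := Nat.even_or_odd' i
    · simp only [hk, interleave_two_mul, interleave_two_mul_add_one] at hright
      have := htu k (by omega)
      have := ht k.lt_add_one
      omega
    · exact ⟨k, by omega, hk⟩
  · rintro ⟨k, hk, hik⟩
    have := ht k.lt_add_one
    have := htu k hk
    refine ⟨by omega, by omega, ?_, ?_⟩ <;>
      simp only [Fin.lt_def, hw, hik, Nat.add_sub_cancel, show 2 * k + 1 + 1 = 2 * (k + 1) by ring,
        interleave_two_mul, interleave_two_mul_add_one] <;> omega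

/-- The witness is `t₀ u₀ t₁ u₁ ⋯ u_{d-1} t_d`; values of `Fin` are `0`-indexed, hence the `+ 1`. -/
theorem exists_pin_eq_of_interleave (hu : ∀ k < d, u k < 2 * d + 1)
    (hu_inj : Set.InjOn u (Set.Iio d)) (ht : StrictMono t) (ht_lt : ∀ j ≤ d, t j < 2 * d + 1)
    (hne : ∀ k < d, ∀ j, u k ≠ t j) (htu : ∀ k < d, t (k + 1) < u k) :
    ∃ w : Equiv.Perm (Fin (2 * d + 1)), Pin w = {v | ∃ k < d, v = u k + 1} := by
  let f : Fin (2 * d + 1) → Fin (2 * d + 1) :=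
    fun i => ⟨interleave u t i, interleave_lt hu ht_lt i.2⟩
  have hf : Function.Injective f := fun i i' h =>
    Fin.ext (injOn_interleave hu_inj ht.injective hne i.2 i'.2 (congrArg Fin.val h))
  let w := Equiv.ofBijective f (Finite.injective_iff_bijective.1 hf)
  have hpeak := isPeak_iff_of_val_eq_interleave ht htu (w := w) fun _ => rfl
  refine ⟨w, Set.ext fun v => ⟨?_, ?_⟩⟩
  · rintro ⟨i, hi, rfl⟩
    obtain ⟨k, hk, hik⟩ := (hpeak i).1 hi
    exact ⟨k, hk, by simp [w, f, hik]⟩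
  · rintro ⟨k, hk, rfl⟩
    exact ⟨⟨2 * k + 1, by omega⟩, (hpeak _).2 ⟨k, hk, rfl⟩, by simp [w, f]⟩

end Interleave

theorem admissible_of_pinnacleBound {S : Finset ℕ} (hS : PinnacleBound S)
    (hle : ∀ s ∈ S, s ≤ 2 * #S + 1) : Admissible S := by
  set d := #S
  set Q : ℕ → Prop := fun x => x + 1 ∈ S
  have hQ_count (m : ℕ) : Nat.count Q m = Nat.count (· ∈ S) (m + 1) := by
    rw [Nat.count_succ', if_neg fun h => by have := hS.two_le h; omega, add_zero]
  have hQ_total : Nat.count Q (2 * d + 1) = d := by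
    rw [hQ_count, Nat.count_mem_eq_card fun s hs => by have := hle s hs; omega]
  have hQ_lt {k : ℕ} (hk : k < d) : ∀ hf : (Set.ofPred Q).Finite, k < #hf.toFinset :=
    fun hf => hk.trans_le (hQ_total ▸ Nat.count_le_card hf _)
  have hnotQ_inf : (Set.ofPred fun x => ¬Q x).Infinite := by
    refine Set.infinite_of_forall_exists_gt fun a => ⟨a + 2 * d + 1, fun h => ?_, by omega⟩
    have := hle _ h
    omega
  have hu_count {k : ℕ} (hk : k < d) : Nat.count Q (Nat.nth Q k) = k := Nat.count_nth (hQ_lt hk)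
  have hu_mem {k : ℕ} (hk : k < d) : Q (Nat.nth Q k) := Nat.nth_mem k (hQ_lt hk)
  have hu_ge {k : ℕ} (hk : k < d) : 2 * (k + 1) < Nat.nth Q k + 1 := by
    have := hS _ (hu_mem hk)
    rwa [← hQ_count, hu_count hk] at this
  obtain ⟨w, hw⟩ := exists_pin_eq_of_interleave (d := d) (u := Nat.nth Q)
    (t := Nat.nth fun x => ¬Q x)
    (fun k hk => Nat.nth_lt_of_lt_count (by rwa [hQ_total]))
    (fun k hk k' hk' h => by rw [← hu_count hk, ← hu_count hk', h])
    (Nat.nth_strictMono hnotQ_inf)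
    (fun j hj => Nat.nth_lt_of_lt_count (by rw [Nat.count_not, hQ_total]; omega))
    (fun k hk j h => Nat.nth_mem_of_infinite hnotQ_inf j (h ▸ hu_mem hk))
    (fun k hk => Nat.nth_lt_of_lt_count (by
      have := hu_ge hk
      rw [Nat.count_not, hu_count hk]
      omega))
  refine ⟨2 * d + 1, w, hw.trans (Set.ext fun v => ⟨?_, fun hv => ?_⟩)⟩
  · rintro ⟨k, hk, rfl⟩
    exact hu_mem hk
  · have h2 := hS.two_le hv
    have hQv : Q (v - 1) := by simpa [Q, Nat.sub_add_cancel (by omega : 1 ≤ v)] using hv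
    have := hle v hv
    refine ⟨Nat.count Q (v - 1), ?_, by rw [Nat.nth_count hQv]; omega⟩
    exact hQ_total ▸ Nat.count_strict_mono hQv (by omega)

def pinnacleWord (d : ℕ) (S : Finset ℕ) : List DyckStep :=
  (List.range (2 * d)).map fun j => if j + 2 ∈ S then D else U

def DyckWord.pinnacleSet (p : DyckWord) : Finset ℕ :=
  {j ∈ range p.toList.length | p.toList[j]? = some D}.image (· + 2)

section PinnacleWord

variable {d : ℕ} {S : Finset ℕ}

theorem length_pinnacleWord : (pinnacleWord d S).length = 2 * d := by
  simp [pinnacleWord]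

theorem getElem?_pinnacleWord (j : ℕ) :
    (pinnacleWord d S)[j]? = if j < 2 * d then some (if j + 2 ∈ S then D else U) else none := by
  by_cases hj : j < 2 * d <;> simp [pinnacleWord, hj]

theorem count_D_take_pinnacleWord (hrange : ∀ s ∈ S, 2 ≤ s ∧ s ≤ 2 * d + 1) (m : ℕ) :
    ((pinnacleWord d S).take m).count D = Nat.count (· ∈ S) (m + 2) := by
  have hD : ∀ j, (pinnacleWord d S)[j]? = some D ↔ j + 2 ∈ S := by
    intro j
    rw [getElem?_pinnacleWord]
    split_ifs with hj <;> simp_all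
    exact fun h => by have := hrange _ h; omega
  rw [List.count_take_eq_count_getElem?,
    Nat.count_add_of_forall_lt_not fun j hj h => by have := hrange _ h; omega]
  simp_rw [hD]

def DyckWord.ofPinnacleBound (hS : PinnacleBound S) (hcard : #S = d)
    (hle : ∀ s ∈ S, s ≤ 2 * d + 1) : DyckWord where
  toList := pinnacleWord d S
  count_U_eq_count_D := by
    have hD := count_D_take_pinnacleWord (fun s hs => ⟨hS.two_le hs, hle s hs⟩) (2 * d)
    rw [List.take_of_length_le length_pinnacleWord.le,
      Nat.count_mem_eq_card fun s hs => by have := hle s hs; omega, hcard] at hD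
    have := DyckStep.count_U_add_count_D (pinnacleWord d S)
    rw [length_pinnacleWord] at this
    omega
  count_D_le_count_U i := by
    rw [List.take_eq_take_min]
    set m := min i (pinnacleWord d S).length
    have hD := count_D_take_pinnacleWord (fun s hs => ⟨hS.two_le hs, hle s hs⟩) m
    have hm := pinnacleBound_iff.1 hS m
    have := DyckStep.count_U_add_count_D ((pinnacleWord d S).take m)
    rw [List.length_take] at this
    omega

theorem DyckWord.semilength_ofPinnacleBound (hS : PinnacleBound S) (hcard : #S = d)
    (hle : ∀ s ∈ S, s ≤ 2 * d + 1) : (ofPinnacleBound hS hcard hle).semilength = d := by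
  have := (ofPinnacleBound hS hcard hle).two_mul_semilength_eq_length
  rw [show (ofPinnacleBound hS hcard hle).toList = pinnacleWord d S from rfl,
    length_pinnacleWord] at this
  omega

end PinnacleWord

namespace DyckWord

variable (p : DyckWord)

theorem mem_pinnacleSet {s : ℕ} : s ∈ p.pinnacleSet ↔ 2 ≤ s ∧ p.toList[s - 2]? = some D := by
  simp only [pinnacleSet, mem_image, mem_filter, mem_range]
  constructor
  · rintro ⟨j, ⟨-, hj⟩, rfl⟩
    simpa using hj
  · rintro ⟨hs, hD⟩
    exact ⟨s - 2, ⟨(List.getElem?_eq_some_iff.1 hD).1, hD⟩, by omega⟩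

theorem count_mem_pinnacleSet (m : ℕ) :
    Nat.count (· ∈ p.pinnacleSet) (m + 2) = (p.toList.take m).count D := by
  rw [List.count_take_eq_count_getElem?,
    Nat.count_add_of_forall_lt_not fun j hj h => by have := ((mem_pinnacleSet p).1 h).1; omega]
  simp [mem_pinnacleSet]

theorem pinnacleBound_pinnacleSet : PinnacleBound p.pinnacleSet := by
  refine pinnacleBound_iff.2 fun m => ?_
  rw [count_mem_pinnacleSet]
  have := p.count_D_le_count_U m
  have := DyckStep.count_U_add_count_D (p.toList.take m)
  rw [List.length_take] at this
  omega

theorem pinnacleSet_ofPinnacleBound {d : ℕ} {S : Finset ℕ} (hS : PinnacleBound S)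
    (hcard : #S = d) (hle : ∀ s ∈ S, s ≤ 2 * d + 1) :
    (ofPinnacleBound hS hcard hle).pinnacleSet = S := by
  ext s
  rw [mem_pinnacleSet, show (ofPinnacleBound hS hcard hle).toList = pinnacleWord d S from rfl,
    getElem?_pinnacleWord]
  constructor
  · intro h
    split_ifs at h with h1 h2 <;> simp_all [show s - 2 + 2 = s by omega]
  · intro h
    have h2 := hS.two_le h
    have := hle s h
    rw [if_pos (by omega), show s - 2 + 2 = s by omega, if_pos h]
    exact ⟨h2, rfl⟩

theorem le_of_mem_pinnacleSet {s : ℕ} (hs : s ∈ p.pinnacleSet) : s ≤ 2 * p.semilength + 1 := by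
  obtain ⟨-, hD⟩ := (mem_pinnacleSet p).1 hs
  have := (List.getElem?_eq_some_iff.1 hD).1
  have := p.two_mul_semilength_eq_length
  omega

theorem card_pinnacleSet : #p.pinnacleSet = p.semilength := by
  rw [← Nat.count_mem_eq_card fun s hs => Nat.lt_succ_of_le (p.le_of_mem_pinnacleSet hs),
    count_mem_pinnacleSet, two_mul_semilength_eq_length, List.take_length, semilength_eq_count_D]

theorem ofPinnacleBound_pinnacleSet :
    ofPinnacleBound p.pinnacleBound_pinnacleSet p.card_pinnacleSet
      (fun _ => p.le_of_mem_pinnacleSet) = p := by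
  refine DyckWord.ext (List.ext_getElem? fun j => ?_)
  show (pinnacleWord p.semilength p.pinnacleSet)[j]? = p.toList[j]?
  rw [getElem?_pinnacleWord, p.two_mul_semilength_eq_length]
  split_ifs with hj hD
  · exact ((p.mem_pinnacleSet.1 hD).2.trans (by simp)).symm
  · rw [List.getElem?_eq_getElem hj]
    cases h : p.toList[j]
    · rfl
    · simp [mem_pinnacleSet, List.getElem?_eq_getElem hj, h] at hD
  · exact (List.getElem?_eq_none (not_lt.1 hj)).symm

end DyckWord

def pinnacleSetEquivDyckWord (d : ℕ) :
    {S : Finset ℕ // PinnacleBound S ∧ #S = d ∧ ∀ s ∈ S, s ≤ 2 * d + 1} ≃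
      {p : DyckWord // p.semilength = d} where
  toFun S := ⟨.ofPinnacleBound S.2.1 S.2.2.1 S.2.2.2, DyckWord.semilength_ofPinnacleBound ..⟩
  invFun p := ⟨p.1.pinnacleSet, p.1.pinnacleBound_pinnacleSet, p.1.card_pinnacleSet.trans p.2,
    fun _ hs => p.2 ▸ p.1.le_of_mem_pinnacleSet hs⟩
  left_inv S := Subtype.ext (DyckWord.pinnacleSet_ofPinnacleBound S.2.1 S.2.2.1 S.2.2.2)
  right_inv p := by
    obtain ⟨p, rfl⟩ := p
    exact Subtype.ext p.ofPinnacleBound_pinnacleSet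

theorem admissible_and_card_and_max'_iff {S : Finset ℕ} {d : ℕ} (hd : 1 ≤ d) :
    (Admissible S ∧ #S = d ∧ ∃ h : S.Nonempty, S.max' h = 2 * d + 1) ↔
      PinnacleBound S ∧ #S = d ∧ ∀ s ∈ S, s ≤ 2 * d + 1 := by
  constructor
  · rintro ⟨⟨n, w, hw⟩, hcard, hne, hmax⟩
    exact ⟨pinnacleBound_of_pin_eq hw, hcard, ((S.max'_eq_iff hne _).1 hmax).2⟩
  · rintro ⟨hS, hcard, hle⟩
    have hmem := hS.mem_of_card_eq hd hcard hle
    exact ⟨admissible_of_pinnacleBound hS (hcard ▸ hle), hcard, ⟨_, hmem⟩,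
      (S.max'_eq_iff _ _).2 ⟨hmem, hle⟩⟩

theorem count_admissible_catalan (d : ℕ) (hd : 1 ≤ d) :
    Nat.card {S : Finset ℕ //
        Admissible S ∧ S.card = d ∧ ∃ h : S.Nonempty, S.max' h = 2 * d + 1} =
      Nat.choose (2 * d) d / (d + 1) := by
  rw [Nat.card_congr ((Equiv.subtypeEquivRight fun _ => admissible_and_card_and_max'_iff hd).trans
      (pinnacleSetEquivDyckWord d)),
    Nat.card_eq_fintype_card, DyckWord.card_dyckWord_semilength_eq_catalan,
    catalan_eq_centralBinom_div, Nat.centralBinom_eq_two_mul_choose]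
end
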